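/- Let W_1, …, W_L be nonzero real matrices such that the harmonic mean of the ratios ‖W_i‖_F / ‖W_i‖_σ is at most B^{k/L} for some B > 0 and integers 1 ≤ k < L. Then there exists an index l and ε₀ > 0 such that for all 0 < ε < ε₀, rank_ε(W_l) ≤ ‖W_l‖_σ² · B^{2k/L} / ε². -/

import Mathlib

/-!
Since `‖W‖_F² = ∑ σᵢ²` and every singular value counted by `rank_ε` exceeds `ε`, one has
`ε² · rank_ε(W) ≤ ‖W‖_F²`. The smallest of the ratios `‖Wᵢ‖_F / ‖Wᵢ‖_σ` is at most their harmonic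
mean, hence at most `B^{k/L}`; for that layer `‖W‖_F² ≤ ‖W‖_σ² B^{2k/L}`, and the bound holds for
every `ε > 0`.
-/

noncomputable def singularValues {m n : ℕ} (A : Matrix (Fin m) (Fin n) ℝ) : Fin n → ℝ :=
  fun i => Real.sqrt ((Matrix.isHermitian_conjTranspose_mul_self A).eigenvalues i)

noncomputable def epsRank {m n : ℕ} (A : Matrix (Fin m) (Fin n) ℝ) (ε : ℝ) : ℕ :=
  (Finset.univ.filter (fun i => ε < singularValues A i)).card

noncomputable def frobNorm {m n : ℕ} (A : Matrix (Fin m) (Fin n) ℝ) : ℝ :=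
  Real.sqrt (∑ i, ∑ j, (A i j) ^ 2)

noncomputable def opNorm {m n : ℕ} (A : Matrix (Fin m) (Fin n) ℝ) : ℝ :=
  ⨆ i, singularValues A i

theorem exists_le_card_div_sum_inv {ι : Type*} [Fintype ι] [Nonempty ι] {x : ι → ℝ}
    (hx : ∀ i, 0 < x i) : ∃ i, x i ≤ Fintype.card ι / ∑ j, (x j)⁻¹ := by
  obtain ⟨i, hi⟩ := Finite.exists_min x
  refine ⟨i, (le_div_iff₀ (Finset.sum_pos (fun j _ => inv_pos.2 (hx j)) Finset.univ_nonempty)).2 ?_⟩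
  calc x i * ∑ j, (x j)⁻¹ = ∑ j, x i / x j := Finset.mul_sum _ _ _
    _ ≤ ∑ _j : ι, (1 : ℝ) := Finset.sum_le_sum fun j _ => div_le_one_of_le₀ (hi j) (hx j).le
    _ = Fintype.card ι := by simp

section Matrix

open scoped Matrix

variable {m n : ℕ} (A : Matrix (Fin m) (Fin n) ℝ)

theorem singularValues_nonneg (i : Fin n) : 0 ≤ singularValues A i := Real.sqrt_nonneg _

theorem singularValues_le_opNorm (i : Fin n) : singularValues A i ≤ opNorm A :=
  le_ciSup (Set.finite_range _).bddAbove i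

theorem opNorm_nonneg : 0 ≤ opNorm A := Real.iSup_nonneg (singularValues_nonneg A)

theorem sum_singularValues_sq : ∑ i, singularValues A i ^ 2 = ∑ i, ∑ j, A i j ^ 2 := by
  have hH := Matrix.isHermitian_conjTranspose_mul_self A
  calc ∑ i, singularValues A i ^ 2 = ∑ i, hH.eigenvalues i :=
        Finset.sum_congr rfl fun i _ =>
          Real.sq_sqrt ((Matrix.posSemidef_conjTranspose_mul_self A).eigenvalues_nonneg i)
    _ = (Aᴴ * A).trace := by rw [hH.trace_eq_sum_eigenvalues]; rfl
    _ = ∑ i, ∑ j, A i j ^ 2 := by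
        rw [Matrix.trace, Finset.sum_comm]
        simp [Matrix.mul_apply, sq]

theorem frobNorm_sq : frobNorm A ^ 2 = ∑ i, singularValues A i ^ 2 := by
  rw [sum_singularValues_sq, frobNorm, Real.sq_sqrt (by positivity)]

theorem frobNorm_sq_le_card_mul_opNorm_sq : frobNorm A ^ 2 ≤ n * opNorm A ^ 2 := by
  rw [frobNorm_sq]
  calc ∑ i, singularValues A i ^ 2 ≤ ∑ _i : Fin n, opNorm A ^ 2 :=
        Finset.sum_le_sum fun i _ =>
          pow_le_pow_left₀ (singularValues_nonneg A i) (singularValues_le_opNorm A i) 2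
    _ = n * opNorm A ^ 2 := by simp

variable {A}

theorem frobNorm_pos (hA : A ≠ 0) : 0 < frobNorm A := by
  obtain ⟨i, j, hij⟩ : ∃ i j, A i j ≠ 0 := by
    by_contra! h
    exact hA (Matrix.ext h)
  refine Real.sqrt_pos.2 (Finset.sum_pos' (fun _ _ => by positivity) ⟨i, Finset.mem_univ _, ?_⟩)
  exact Finset.sum_pos' (fun _ _ => by positivity) ⟨j, Finset.mem_univ _, by positivity⟩

theorem opNorm_pos (hA : A ≠ 0) : 0 < opNorm A := by
  have h := (pow_pos (frobNorm_pos hA) 2).trans_le (frobNorm_sq_le_card_mul_opNorm_sq A)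
  exact (opNorm_nonneg A).lt_of_ne fun h0 => by simp [← h0] at h

theorem sq_mul_epsRank_le_frobNorm_sq {ε : ℝ} (hε : 0 ≤ ε) :
    ε ^ 2 * epsRank A ε ≤ frobNorm A ^ 2 := by
  rw [frobNorm_sq, epsRank, mul_comm, ← nsmul_eq_mul, ← Finset.sum_const]
  calc ∑ _i ∈ Finset.univ.filter (fun i => ε < singularValues A i), ε ^ 2
      ≤ ∑ i ∈ Finset.univ.filter (fun i => ε < singularValues A i), singularValues A i ^ 2 :=
        Finset.sum_le_sum fun i hi => pow_le_pow_left₀ hε (Finset.mem_filter.1 hi).2.le 2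
    _ ≤ ∑ i, singularValues A i ^ 2 :=
        Finset.sum_le_sum_of_subset_of_nonneg (Finset.filter_subset _ _) fun _ _ _ => by positivity

theorem epsRank_le_of_frobNorm_div_opNorm_le (hA : A ≠ 0) {ε t : ℝ} (hε : 0 < ε)
    (h : frobNorm A / opNorm A ≤ t) : (epsRank A ε : ℝ) ≤ opNorm A ^ 2 * t ^ 2 / ε ^ 2 := by
  have hF : frobNorm A ≤ opNorm A * t := by
    rwa [div_le_iff₀ (opNorm_pos hA), mul_comm] at h
  rw [le_div_iff₀ (by positivity), mul_comm, ← mul_pow]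
  exact (sq_mul_epsRank_le_frobNorm_sq hε.le).trans
    (pow_le_pow_left₀ (frobNorm_pos hA).le hF 2)

end Matrix

theorem exists_bottleneck_layer_interp_general {L k : ℕ} (hkL : k < L)
    (m n : Fin L → ℕ) (W : (i : Fin L) → Matrix (Fin (m i)) (Fin (n i)) ℝ)
    (hW : ∀ i, W i ≠ 0) (B : ℝ) (hB : 0 < B)
    (hHM : (L : ℝ) / (∑ i, (frobNorm (W i) / opNorm (W i))⁻¹) ≤
      Real.rpow B ((k : ℝ) / (L : ℝ))) :
    ∃ l, ∃ ε₀ > 0, ∀ ε : ℝ, 0 < ε → ε < ε₀ →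
      (epsRank (W l) ε : ℝ) ≤
        opNorm (W l) ^ 2 * Real.rpow B ((2 * k : ℝ) / (L : ℝ)) / ε ^ 2 := by
  have : Nonempty (Fin L) := ⟨⟨0, by omega⟩⟩
  obtain ⟨l, hl⟩ := exists_le_card_div_sum_inv fun i =>
    div_pos (frobNorm_pos (hW i)) (opNorm_pos (hW i))
  rw [Fintype.card_fin] at hl
  have hsq : Real.rpow B ((2 * k : ℝ) / L) = Real.rpow B ((k : ℝ) / L) ^ 2 := by
    rw [show (2 * k : ℝ) / L = k / L * (2 : ℕ) by push_cast; ring]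
    exact Real.rpow_mul_natCast hB.le _ 2
  refine ⟨l, 1, one_pos, fun ε hε _ => ?_⟩
  rw [hsq]
  exact epsRank_le_of_frobNorm_div_opNorm_le (hW l) hε (hl.trans hHM)

theorem exists_bottleneck_layer_interp {L k : ℕ} (hk : 1 ≤ k) (hkL : k < L)
    (m n : Fin L → ℕ) (W : (i : Fin L) → Matrix (Fin (m i)) (Fin (n i)) ℝ)
    (hW : ∀ i, W i ≠ 0) (B : ℝ) (hB : 0 < B)
    (hHM : (L : ℝ) / (∑ i, (frobNorm (W i) / opNorm (W i))⁻¹) ≤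
      Real.rpow B ((k : ℝ) / (L : ℝ))) :
    ∃ l, ∃ ε₀ > 0, ∀ ε : ℝ, 0 < ε → ε < ε₀ →
      (epsRank (W l) ε : ℝ) ≤
        opNorm (W l) ^ 2 * Real.rpow B ((2 * k : ℝ) / (L : ℝ)) / ε ^ 2 :=
  exists_bottleneck_layer_interp_general hkL m n W hW B hB hHM
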